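/- arXiv:1106.1545 — 3 statements merged into one kernel-verified Lean document; each statement's English description precedes it below -/
import Mathlib

section
/- Let A and B be commuting nilpotent n × n matrices with Jordan types λ = (λ₁, ..., λ_t) and μ = (μ₁, ..., μ_s) respectively. If s ≥ n − λ_t/2 (where λ_t is the smallest part of λ), then μ₁ ≤ 2, i.e., A² = 0. -/
open Matrix

/-- `l` is a partition of `n`: nonincreasing list of positive integers summing to `n`. -/
def IsPartition (n : ℕ) (l : List ℕ) : Prop :=
  l.Pairwise (· ≥ ·) ∧ (∀ x ∈ l, 0 < x) ∧ l.sum = n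

/-- A partition is almost rectangular if any two parts differ by at most 1. -/
def AlmostRect (l : List ℕ) : Prop := ∀ a ∈ l, ∀ b ∈ l, a ≤ b + 1

/-- The unique almost rectangular partition of `n` with `t` parts:
`⌈n/t⌉` repeated `r` times followed by `⌊n/t⌋` repeated `t - r` times, `r = n - t⌊n/t⌋`. -/
def ARP (n t : ℕ) : List ℕ :=
  List.replicate (n - t * (n / t)) (n / t + 1) ++
    List.replicate (t - (n - t * (n / t))) (n / t)

/-- A nilpotent matrix `A` has Jordan type `l` iff `l` is a partition of `n` and the rank
of every power `A ^ i` equals `∑_p max(p - i, 0)` over the parts `p` of `l`; this rank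
condition characterizes the Jordan canonical form of a nilpotent matrix. -/
def HasJordanType {K : Type*} [Field K] {n : ℕ} (A : Matrix (Fin n) (Fin n) K)
    (l : List ℕ) : Prop :=
  IsPartition n l ∧ ∀ i : ℕ, (A ^ i).rank = (l.map fun p => p - i).sum

/-- The `m × m` nilpotent upper triangular Jordan block. -/
def Jblock (K : Type*) [Field K] (m : ℕ) : Matrix (Fin m) (Fin m) K :=
  Matrix.of fun i j => if (i : ℕ) + 1 = (j : ℕ) then 1 else 0

/-- `DEq K n lam mu` expresses `D(lam) = mu`: some nilpotent matrix of Jordan type `mu`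
commutes with a nilpotent matrix of Jordan type `lam`, and `mu` dominates every Jordan
type occurring in the nilpotent commutator of a matrix of type `lam`. -/
def DEq (K : Type*) [Field K] (n : ℕ) (lam mu : List ℕ) : Prop :=
  (∃ A B : Matrix (Fin n) (Fin n) K,
      A * B = B * A ∧ HasJordanType B lam ∧ HasJordanType A mu) ∧
  ∀ nu : List ℕ,
    (∃ A B : Matrix (Fin n) (Fin n) K,
      A * B = B * A ∧ HasJordanType B lam ∧ HasJordanType A nu) →
    ∀ k : ℕ, (nu.take k).sum ≤ (mu.take k).sum

/-- A rectangular matrix that is upper triangular and constant along diagonals. -/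
def UTToeplitz {K : Type*} [Field K] {p r : ℕ} (M : Matrix (Fin p) (Fin r) K) : Prop :=
  (∀ (i : Fin p) (j : Fin r), (j : ℕ) < (i : ℕ) → M i j = 0) ∧
  (∀ (i i' : Fin p) (j j' : Fin r),
    (j : ℕ) + (i' : ℕ) = (j' : ℕ) + (i : ℕ) → M i j = M i' j')

/-!
Let `r = n - s`, the rank of `A`. The image of `A` is a `B`-invariant subspace of dimension `r`
on which `B` is nilpotent, so `B ^ r` kills it; as `B ^ r` commutes with `A`, the image of
`B ^ r` lies in the kernel of `A`. Every Jordan block of `B` has size at least `λ_t ≥ 2r`, so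
`dim ker B ^ (2r) = 2 dim ker B ^ r`, which forces `ker B ^ r ⊆ im B ^ r`. Hence
`im A ⊆ ker B ^ r ⊆ im B ^ r ⊆ ker A`, i.e. `A ^ 2 = 0`.
-/

namespace Module.End

open LinearMap Module

variable {K V : Type*} [Field K] [AddCommGroup V] [Module K V] [FiniteDimensional K V]

theorem _root_.LinearMap.finrank_map_add_finrank_ker_of_ker_le {W : Type*} [AddCommGroup W]
    [Module K W] (g : V →ₗ[K] W) {p : Submodule K V} (hp : ker g ≤ p) :
    finrank K (p.map g) + finrank K (ker g) = finrank K p := by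
  have := finrank_range_add_finrank_ker (g.domRestrict p)
  rwa [range_domRestrict, ker_domRestrict, (Submodule.comapSubtypeEquivOfLe hp).finrank_eq]
    at this

theorem pow_finrank_eq_zero_of_isNilpotent {f : End K V} (hf : IsNilpotent f) :
    f ^ finrank K V = 0 := by
  obtain ⟨k, hk⟩ := hf
  have := ker_pow_le_ker_pow_finrank f k
  rwa [hk, ker_zero, top_le_iff, ker_eq_top] at this

theorem pow_apply_eq_zero_of_mem_of_finrank_le {f : End K V} (hf : IsNilpotent f)
    {W : Submodule K V} (hW : ∀ x ∈ W, f x ∈ W) {k : ℕ} (hk : finrank K W ≤ k) {x : V}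
    (hx : x ∈ W) :
    (f ^ k) x = 0 := by
  have hres : f.restrict hW ^ k = 0 :=
    pow_eq_zero_of_le hk (pow_finrank_eq_zero_of_isNilpotent (isNilpotent.restrict hW hf))
  have := congr(($hres ⟨x, hx⟩ : V))
  rwa [pow_restrict k hW, restrict_apply] at this

/-- `f ^ c` maps `ker (f ^ (a + c))` into `ker (f ^ a)` with kernel `ker (f ^ c)`, so the
dimension hypothesis makes it onto. -/
theorem ker_pow_le_range_pow_of_finrank_ker_add {f : End K V} {a c : ℕ}
    (h : finrank K (ker (f ^ (a + c))) = finrank K (ker (f ^ a)) + finrank K (ker (f ^ c))) :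
    ker (f ^ a) ≤ range (f ^ c) := by
  have hker : ker (f ^ c) ≤ ker (f ^ (a + c)) := by
    rw [pow_add, mul_eq_comp]
    exact ker_le_ker_comp _ _
  have hmaps : (ker (f ^ (a + c))).map (f ^ c) ≤ ker (f ^ a) := by
    rintro _ ⟨x, hx, rfl⟩
    rwa [mem_ker, ← mul_apply, ← pow_add]
  have hdim := finrank_map_add_finrank_ker_of_ker_le (f ^ c) hker
  rw [← Submodule.eq_of_le_of_finrank_eq hmaps (by omega)]
  exact map_le_range

theorem mul_self_eq_zero_of_commute {f g : End K V} (hfg : Commute f g) (hg : IsNilpotent g)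
    {r : ℕ} (hr : finrank K (range f) ≤ r)
    (h : finrank K (ker (g ^ (r + r))) = finrank K (ker (g ^ r)) + finrank K (ker (g ^ r))) :
    f * f = 0 := by
  have hinv : ∀ x ∈ range f, g x ∈ range f := by
    rintro _ ⟨y, rfl⟩
    exact ⟨g y, LinearMap.congr_fun hfg.eq y⟩
  have hrange_ker : range f ≤ ker (g ^ r) := fun _ hx ↦
    pow_apply_eq_zero_of_mem_of_finrank_le hg hinv hr hx
  have hrange_pow : range (g ^ r) ≤ ker f := by
    rintro _ ⟨y, rfl⟩
    rw [mem_ker, ← mul_apply, (hfg.pow_right r).eq, mul_apply]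
    exact hrange_ker ⟨y, rfl⟩
  rw [mul_eq_comp, ← range_le_ker_iff]
  exact (hrange_ker.trans (ker_pow_le_range_pow_of_finrank_ker_add h)).trans hrange_pow

end Module.End

theorem List.sum_map_tsub_add_mul_length {l : List ℕ} {k : ℕ} (h : ∀ x ∈ l, k ≤ x) :
    (l.map fun p => p - k).sum + k * l.length = l.sum := by
  induction l with
  | nil => simp
  | cons a l ih =>
    have ha := h a List.mem_cons_self
    have hl := ih fun x hx ↦ h x (List.mem_cons_of_mem a hx)
    simp only [List.map_cons, List.sum_cons, List.length_cons, Nat.mul_succ]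
    omega

namespace HasJordanType

open LinearMap Module

variable {K : Type*} [Field K] {n : ℕ} {A : Matrix (Fin n) (Fin n) K} {l : List ℕ}

theorem finrank_ker_toLin'_pow (hA : HasJordanType A l) {i : ℕ} (hi : ∀ p ∈ l, i ≤ p) :
    finrank K (ker (toLin' A ^ i)) = i * l.length := by
  have hdim := finrank_range_add_finrank_ker (toLin' A ^ i)
  have hrank : finrank K (range (toLin' A ^ i)) = (A ^ i).rank := by rw [← toLin'_pow]; rfl
  have hsum := List.sum_map_tsub_add_mul_length hi
  rw [hrank, hA.2 i, finrank_fin_fun] at hdim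
  have := hA.1.2.2
  omega

theorem finrank_range_toLin' (hA : HasJordanType A l) :
    finrank K (range (toLin' A)) = n - l.length := by
  have hsum := List.sum_map_tsub_add_mul_length (k := 1) hA.1.2.1
  have hrank := hA.2 1
  rw [pow_one] at hrank
  have := hA.1.2.2
  change A.rank = _
  omega

theorem isNilpotent_toLin' (hA : HasJordanType A l) : IsNilpotent (toLin' A) := by
  refine ⟨n, ?_⟩
  rw [← toLin'_pow, ← range_eq_bot, ← Submodule.finrank_eq_zero]
  change (A ^ n).rank = 0
  rw [hA.2 n]
  refine List.sum_eq_zero fun x hx ↦ ?_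
  obtain ⟨p, hp, rfl⟩ := List.mem_map.mp hx
  have := hA.1.2.2 ▸ List.le_sum_of_mem hp
  omega

theorem le_of_pow_eq_zero (hA : HasJordanType A l) {i : ℕ} (h : A ^ i = 0) : ∀ p ∈ l, p ≤ i := by
  intro p hp
  have hrank := hA.2 i
  rw [h, Matrix.rank_zero] at hrank
  have := List.le_sum_of_mem (List.mem_map_of_mem (f := fun p => p - i) hp)
  omega

end HasJordanType

theorem stmt8_general {K : Type*} [Field K] {n : ℕ}
    (A B : Matrix (Fin n) (Fin n) K) (hc : A * B = B * A)
    (lam mu : List ℕ) (hne : lam ≠ [])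
    (hB : HasJordanType B lam) (hA : HasJordanType A mu)
    (hs : 2 * n ≤ 2 * mu.length + lam.getLast hne) :
    A ^ 2 = 0 ∧ ∀ x ∈ mu, x ≤ 2 := by
  have hker (i : ℕ) (hi : i ≤ lam.getLast hne) :
      Module.finrank K (LinearMap.ker (toLin' B ^ i)) = i * lam.length :=
    hB.finrank_ker_toLin'_pow fun p hp ↦ hi.trans (hB.1.1.rel_getLast hp)
  have hA2 : A ^ 2 = 0 := by
    apply toLin'.injective
    rw [toLin'_pow, map_zero, sq]
    refine Module.End.mul_self_eq_zero_of_commute ?_ hB.isNilpotent_toLin'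
      hA.finrank_range_toLin'.le ?_
    · rw [commute_iff_eq, Module.End.mul_eq_comp, Module.End.mul_eq_comp, ← toLin'_mul, hc,
        toLin'_mul]
    · rw [hker _ (by omega), hker _ (by omega)]
      ring
  exact ⟨hA2, hA.le_of_pow_eq_zero hA2⟩

/-- If commuting nilpotent `A`, `B` have types `μ`, `λ` and the number `s` of parts of
`μ` satisfies `s ≥ n - λ_t/2` (i.e. `2s + λ_t ≥ 2n`), then `μ₁ ≤ 2`, i.e. `A² = 0`. -/
theorem stmt8 {K : Type*} [Field K] [IsAlgClosed K] [CharZero K] {n : ℕ}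
    (A B : Matrix (Fin n) (Fin n) K) (hc : A * B = B * A)
    (lam mu : List ℕ) (hne : lam ≠ [])
    (hB : HasJordanType B lam) (hA : HasJordanType A mu)
    (hs : 2 * n ≤ 2 * mu.length + lam.getLast hne) :
    A ^ 2 = 0 ∧ ∀ x ∈ mu, x ≤ 2 :=
  stmt8_general A B hc lam mu hne hB hA hs
end

section
/- Let λ be a positive integer and C a nilpotent 2λ × 2λ matrix with Jordan type (λ, λ). Then there exists a nilpotent matrix A commuting with C whose Jordan type is (λ+1, λ−1). -/
open Matrix

/-!
Split the space into two Jordan chains `v₀, C v₀, …, C^(λ-1) v₀` and `v₁, …, C^(λ-1) v₁` of `C`,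
and let `A = C + N`, where `N` commutes with `C`, `N v₁ = v₀` and `N v₀ = 0`. Then
`A^(j+1) v₁ = C^(j+1) v₁ + (j+1) C^j v₀`, so `v₁` starts a Jordan chain of `A` of length `λ + 1`
and `A v₁ - λ v₀` one of length `λ - 1`. As `λ ≠ 0` in `K`, the difference of the two chains
recovers every `C^j v₀`, hence the two chains span and form a Jordan basis of `A`, from which
the ranks of the powers of `A` are read off.
-/

open Module Submodule

section CommutingEndomorphisms

variable {R M : Type*} [CommRing R] [AddCommGroup M] [Module R M] {a c : Module.End R M}

theorem Commute.apply_pow_apply (hac : Commute a c) (j : ℕ) (x : M) :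
    a ((c ^ j) x) = (c ^ j) (a x) :=
  LinearMap.congr_fun (hac.pow_right j).eq x

theorem Commute.pow_apply_eq_of_apply_eq (hac : Commute a c) {x : M} (hx : a x = c x) (j : ℕ) :
    (a ^ j) x = (c ^ j) x := by
  induction j with
  | zero => rfl
  | succ j ih =>
    rw [pow_succ', Module.End.mul_apply, ih, hac.apply_pow_apply, hx, ← Module.End.mul_apply,
      ← pow_succ]

theorem Commute.pow_succ_apply_of_apply_eq_add (hac : Commute a c) {x y : M} (hx : a x = c x)
    (hy : a y = c y + x) (j : ℕ) :
    (a ^ (j + 1)) y = (c ^ (j + 1)) y + (j + 1 : R) • (c ^ j) x := by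
  induction j with
  | zero => simp [hy]
  | succ j ih =>
    rw [pow_succ', Module.End.mul_apply, ih, map_add, map_smul, hac.apply_pow_apply,
      hac.apply_pow_apply, hx, hy, map_add]
    simp only [← Module.End.mul_apply, ← pow_succ]
    push_cast
    module

end CommutingEndomorphisms

section JordanChains

variable {K V ι : Type*} [Field K] [AddCommGroup V] [Module K V]

def jordanChains (f : Module.End K V) (ℓ : ι → ℕ) (w : ι → V) : (Σ i, Fin (ℓ i)) → V :=
  fun p => (f ^ (p.2 : ℕ)) (w p.1)

/-- The Jordan chains `w i, f (w i), …, f ^ (ℓ i - 1) (w i)` form a basis, i.e. `f` is nilpotent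
with Jordan blocks of sizes `ℓ i`. -/
structure IsJordanBasis (f : Module.End K V) (ℓ : ι → ℕ) (w : ι → V) : Prop where
  linearIndependent : LinearIndependent K (jordanChains f ℓ w)
  span_eq_top : span K (Set.range (jordanChains f ℓ w)) = ⊤
  pow_apply_eq_zero : ∀ i, (f ^ ℓ i) (w i) = 0

variable {f : Module.End K V} {ℓ : ι → ℕ} {w : ι → V}

theorem pow_apply_mem_span_jordanChains {i : ι} (hw : (f ^ ℓ i) (w i) = 0) (j : ℕ) :
    (f ^ j) (w i) ∈ span K (Set.range (jordanChains f ℓ w)) := by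
  by_cases hj : j < ℓ i
  · exact subset_span ⟨⟨i, j, hj⟩, rfl⟩
  · rw [Module.End.pow_map_zero_of_le (not_lt.mp hj) hw]
    exact zero_mem _

theorem IsJordanBasis.finrank_range_pow [Fintype ι] (h : IsJordanBasis f ℓ w) (k : ℕ) :
    finrank K (LinearMap.range (f ^ k)) = ∑ i, (ℓ i - k) := by
  set g := jordanChains f (fun i => ℓ i - k) (fun i => (f ^ k) (w i))
  let e : (Σ i, Fin (ℓ i - k)) → Σ i, Fin (ℓ i) := fun p => ⟨p.1, (p.2 : ℕ) + k, by omega⟩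
  have he : Function.Injective e := by
    rintro ⟨i, j⟩ ⟨i', j'⟩ hij
    obtain ⟨rfl, hj⟩ := Sigma.mk.inj_iff.mp hij
    simp only [heq_eq_eq, Fin.mk.injEq, add_left_inj] at hj
    rw [Fin.ext hj]
  have hge : g = jordanChains f ℓ w ∘ e := by
    ext p
    simp [g, e, jordanChains, ← Module.End.mul_apply, ← pow_add]
  have hrange : LinearMap.range (f ^ k) = span K (Set.range g) := by
    refine le_antisymm ?_ (span_le.mpr ?_)
    · rw [LinearMap.range_eq_map, ← h.span_eq_top, map_span, span_le]
      rintro _ ⟨_, ⟨⟨i, j⟩, rfl⟩, rfl⟩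
      have hend : (f ^ (ℓ i - k)) ((f ^ k) (w i)) = 0 := by
        rw [← Module.End.mul_apply, ← pow_add]
        exact Module.End.pow_map_zero_of_le (by omega) (h.pow_apply_eq_zero i)
      rw [SetLike.mem_coe]
      simpa only [jordanChains, ← Module.End.mul_apply, ← pow_mul_comm] using
        pow_apply_mem_span_jordanChains (ℓ := fun i => ℓ i - k) (w := fun i => (f ^ k) (w i))
          hend j
    · rintro _ ⟨⟨i, j⟩, rfl⟩
      simp only [g, jordanChains, ← Module.End.mul_apply, ← pow_mul_comm]
      exact LinearMap.mem_range_self _ _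
  rw [hrange, finrank_span_eq_card (hge ▸ h.linearIndependent.comp e he), Fintype.card_sigma]
  simp

theorem IsJordanBasis.finrank_eq [Fintype ι] (h : IsJordanBasis f ℓ w) :
    finrank K V = ∑ i, ℓ i := by
  have := h.finrank_range_pow 0
  rwa [pow_zero, Module.End.one_eq_id, LinearMap.range_id, finrank_top] at this

theorem linearIndependent_jordanChains_const [Fintype ι] {n : ℕ} {v : ι → V}
    (hv : ∀ i, (f ^ n) (v i) = 0) (hli : LinearIndependent K fun i => (f ^ (n - 1)) (v i)) :
    LinearIndependent K (jordanChains f (fun _ => n) v) := by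
  rw [Fintype.linearIndependent_iff]
  intro c hc
  suffices ∀ j : ℕ, ∀ i (hj : j < n), c ⟨i, j, hj⟩ = 0 from fun p => this p.2 p.1 p.2.2
  intro j
  induction j using Nat.strong_induction_on with
  | _ j ih =>
  intro i hj
  -- `f ^ (n - 1 - j)` kills the chain vectors above level `j`; those below have coefficient `0`
  have hlevel : ∀ i', ∑ j' : Fin n, (f ^ (n - 1 - j)) (c ⟨i', j'⟩ • (f ^ (j' : ℕ)) (v i')) =
      c ⟨i', j, hj⟩ • (f ^ (n - 1)) (v i') := by
    intro i'
    rw [Finset.sum_eq_single ⟨j, hj⟩]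
    · rw [map_smul, ← Module.End.mul_apply, ← pow_add, Nat.sub_add_cancel (by omega)]
    · intro j' _ hj'
      have hj'j : (j' : ℕ) ≠ j := fun h => hj' (Fin.ext h)
      rcases lt_or_gt_of_ne hj'j with hlt | hgt
      · rw [ih j' hlt i' j'.2, zero_smul, map_zero]
      · rw [map_smul, ← Module.End.mul_apply, ← pow_add,
          Module.End.pow_map_zero_of_le (by omega) (hv i'), smul_zero]
    · simp
  have := congrArg (f ^ (n - 1 - j)) hc
  rw [map_sum, map_zero, Fintype.sum_sigma] at this
  simp only [jordanChains, hlevel] at this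
  exact Fintype.linearIndependent_iff.mp hli (fun i' => c ⟨i', j, hj⟩) this i

theorem exists_isJordanBasis_const [FiniteDimensional K V] {n r : ℕ} (hf : f ^ n = 0)
    (hr : finrank K (LinearMap.range (f ^ (n - 1))) = r) (hV : finrank K V = r * n) :
    ∃ v : Fin r → V, IsJordanBasis f (fun _ => n) v := by
  let B := Module.finBasisOfFinrankEq K _ hr
  choose v hv using fun i => LinearMap.mem_range.mp (B i).2
  have hli : LinearIndependent K (jordanChains f (fun _ => n) v) := by
    refine linearIndependent_jordanChains_const (by simp [hf]) ?_
    have hB := B.linearIndependent.map' _ (ker_subtype _)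
    simp only [Function.comp_def, Submodule.subtype_apply, ← hv] at hB
    exact hB
  refine ⟨v, hli, hli.span_eq_top_of_card_eq_finrank' ?_, by simp [hf]⟩
  simp [hV]

theorem IsJordanBasis.of_top_le_span [Fintype ι]
    (hspan : ⊤ ≤ span K (Set.range (jordanChains f ℓ w))) (hcard : ∑ i, ℓ i = finrank K V)
    (hw : ∀ i, (f ^ ℓ i) (w i) = 0) : IsJordanBasis f ℓ w :=
  ⟨linearIndependent_of_top_le_span_of_card_eq_finrank hspan (by simpa using hcard),
    top_le_iff.mp hspan, hw⟩

theorem IsJordanBasis.exists_commute_apply_eq (h : IsJordanBasis f ℓ w) (u : ι → V)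
    (hu : ∀ i, (f ^ ℓ i) (u i) = 0) : ∃ g : Module.End K V, Commute g f ∧ ∀ i, g (w i) = u i := by
  let b := Basis.mk h.linearIndependent h.span_eq_top.ge
  let g := b.constr K (jordanChains f ℓ u)
  have hg : ∀ i (j : ℕ), g ((f ^ j) (w i)) = (f ^ j) (u i) := by
    intro i j
    by_cases hj : j < ℓ i
    · simpa [b, g, jordanChains] using b.constr_basis K (jordanChains f ℓ u) ⟨i, j, hj⟩
    · rw [Module.End.pow_map_zero_of_le (not_lt.mp hj) (h.pow_apply_eq_zero i),
        Module.End.pow_map_zero_of_le (not_lt.mp hj) (hu i), map_zero]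
  refine ⟨g, LinearMap.ext_on_range h.span_eq_top fun ⟨i, j⟩ => ?_,
    fun i => by simpa using hg i 0⟩
  simp only [jordanChains, Module.End.mul_apply, hg, ← Module.End.mul_apply (f := f), ← pow_succ']

theorem IsJordanBasis.isJordanBasis_succ_pred {c a : Module.End K V} {m : ℕ} {v : Fin 2 → V}
    (h : IsJordanBasis c (fun _ => m + 1) v) (hm : (m + 1 : K) ≠ 0) (hac : Commute a c)
    (hav₀ : a (v 0) = c (v 0)) (hav₁ : a (v 1) = c (v 1) + v 0) :
    IsJordanBasis a ![m + 2, m] ![v 1, a (v 1) - (m + 1 : K) • v 0] := by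
  have hcv : ∀ i j, m + 1 ≤ j → (c ^ j) (v i) = 0 := fun i _ hj =>
    Module.End.pow_map_zero_of_le hj (h.pow_apply_eq_zero i)
  have ha₀ := hac.pow_apply_eq_of_apply_eq hav₀
  have ha₁ := hac.pow_succ_apply_of_apply_eq_add hav₀ hav₁
  set w : Fin 2 → V := ![v 1, a (v 1) - (m + 1 : K) • v 0]
  have hw₁ : ∀ j, (a ^ j) (w 1) = (a ^ (j + 1)) (v 1) - (m + 1 : K) • (c ^ j) (v 0) := by
    intro j
    simp only [w, Matrix.cons_val_one, Matrix.cons_val_zero, map_sub, map_smul, ha₀]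
    rw [← Module.End.mul_apply, ← pow_succ]
  have hend : ∀ i, (a ^ ![m + 2, m] i) (w i) = 0 := by
    intro i
    fin_cases i
    · show (a ^ (m + 2)) (v 1) = 0
      rw [ha₁, hcv 1 _ (by omega), hcv 0 _ le_rfl, smul_zero, add_zero]
    · show (a ^ m) (w 1) = 0
      rw [hw₁, ha₁, hcv 1 _ le_rfl, zero_add, sub_self]
  refine .of_top_le_span ?_ (by simp [h.finrank_eq]; omega) hend
  set S := span K (Set.range (jordanChains a ![m + 2, m] w))
  have hS : ∀ i j, (a ^ j) (w i) ∈ S := fun i j => pow_apply_mem_span_jordanChains (hend i) j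
  have hS₀ : ∀ j, (c ^ j) (v 0) ∈ S := by
    intro j
    rw [← smul_mem_iff _ hm, ← sub_sub_cancel ((a ^ (j + 1)) (v 1)) ((m + 1 : K) • _), ← hw₁]
    exact sub_mem (hS 0 _) (hS 1 _)
  have hS₁ : ∀ j, (c ^ j) (v 1) ∈ S := by
    rintro (_ | j)
    · exact hS 0 0
    · rw [← add_sub_cancel_right ((c ^ (j + 1)) (v 1)) ((j + 1 : K) • (c ^ j) (v 0)), ← ha₁]
      exact sub_mem (hS 0 _) (smul_mem _ _ (hS₀ j))
  rw [← h.span_eq_top, span_le]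
  rintro _ ⟨⟨i, j⟩, rfl⟩
  fin_cases i
  exacts [hS₀ j, hS₁ j]

theorem IsJordanBasis.exists_commute_isJordanBasis_succ_pred {c : Module.End K V} {m : ℕ}
    {v : Fin 2 → V} (h : IsJordanBasis c (fun _ => m + 1) v) (hm : (m + 1 : K) ≠ 0) :
    ∃ a : Module.End K V, Commute a c ∧ ∃ w : Fin 2 → V, IsJordanBasis a ![m + 2, m] w := by
  have hcv : ∀ i, (c ^ (m + 1)) (c (v i)) = 0 := fun i => by
    rw [← Module.End.mul_apply, pow_mul_comm', Module.End.mul_apply, h.pow_apply_eq_zero, map_zero]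
  -- `a = c + N` with `N v₁ = v₀` and `N v₀ = 0`
  obtain ⟨a, hac, hav⟩ := h.exists_commute_apply_eq ![c (v 0), c (v 1) + v 0] fun i => by
    fin_cases i
    · exact hcv 0
    · simpa [hcv 1] using h.pow_apply_eq_zero 0
  exact ⟨a, hac, _, h.isJordanBasis_succ_pred hm hac (by simpa using hav 0) (by simpa using hav 1)⟩

end JordanChains

theorem Matrix.rank_pow_eq_finrank_range {K n : Type*} [Field K] [Fintype n] [DecidableEq n]
    (M : Matrix n n K) (i : ℕ) : (M ^ i).rank = finrank K (LinearMap.range (M.toLin' ^ i)) := by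
  rw [Matrix.rank, ← Matrix.toLin'_apply', Matrix.toLin'_pow]

theorem hasJordanType_succ_pred_of_rank_pow {K : Type*} [Field K] {m : ℕ}
    {A : Matrix (Fin (2 * (m + 1))) (Fin (2 * (m + 1))) K}
    (hA : ∀ i, (A ^ i).rank = (m + 2 - i) + (m - i)) :
    HasJordanType A (if m + 1 = 1 then [m + 1 + 1] else [m + 1 + 1, m + 1 - 1]) := by
  split_ifs with hm
  · obtain rfl : m = 0 := by omega
    exact ⟨⟨by simp, by simp, by simp⟩, fun i => by simp [hA]⟩
  · rw [add_tsub_cancel_right]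
    refine ⟨⟨List.pairwise_pair.mpr (by omega), fun p hp => ?_,
      by simp only [List.sum_pair]; omega⟩, fun i => by simp [hA]⟩
    rcases List.mem_pair.mp hp with rfl | rfl <;> omega

theorem stmt12_general {K : Type*} [Field K] [CharZero K]
    (lam : ℕ) (hl : 0 < lam)
    (C : Matrix (Fin (2 * lam)) (Fin (2 * lam)) K) (hC : HasJordanType C [lam, lam]) :
    ∃ A : Matrix (Fin (2 * lam)) (Fin (2 * lam)) K, A * C = C * A ∧
      HasJordanType A (if lam = 1 then [lam + 1] else [lam + 1, lam - 1]) := by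
  obtain ⟨m, rfl⟩ : ∃ m, lam = m + 1 := ⟨lam - 1, by omega⟩
  have hrank : ∀ i, finrank K (LinearMap.range (C.toLin' ^ i)) = 2 * (m + 1 - i) := fun i => by
    rw [← Matrix.rank_pow_eq_finrank_range, hC.2 i]
    simp only [List.map_cons, List.map_nil, List.sum_pair]
    omega
  have hC0 : C.toLin' ^ (m + 1) = 0 :=
    LinearMap.range_eq_bot.mp (Submodule.finrank_eq_zero.mp (by simpa using hrank (m + 1)))
  obtain ⟨v, hv⟩ := exists_isJordanBasis_const hC0 (r := 2) (by simpa using hrank m) (by simp)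
  obtain ⟨a, hac, w, hw⟩ := hv.exists_commute_isJordanBasis_succ_pred
    (by exact_mod_cast m.succ_ne_zero)
  refine ⟨LinearMap.toMatrix' a, ?_, hasJordanType_succ_pred_of_rank_pow fun i => ?_⟩
  · rw [← LinearMap.toMatrix'_toLin' C, ← LinearMap.toMatrix'_mul, hac.eq, LinearMap.toMatrix'_mul]
  · rw [Matrix.rank_pow_eq_finrank_range, Matrix.toLin'_toMatrix', hw.finrank_range_pow,
      Fin.sum_univ_two]
    rfl

/-- If `C` has Jordan type `(λ, λ)`, then some nilpotent matrix commuting with `C`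
has Jordan type `(λ+1, λ-1)`. -/
theorem stmt12 {K : Type*} [Field K] [IsAlgClosed K] [CharZero K]
    (lam : ℕ) (hl : 0 < lam)
    (C : Matrix (Fin (2 * lam)) (Fin (2 * lam)) K) (hC : HasJordanType C [lam, lam]) :
    ∃ A : Matrix (Fin (2 * lam)) (Fin (2 * lam)) K, A * C = C * A ∧
      HasJordanType A (if lam = 1 then [lam + 1] else [lam + 1, lam - 1]) :=
  stmt12_general lam hl C hC
end

section
/- Let B be a nilpotent 2λ × 2λ matrix with Jordan type (λ, λ) and A a nilpotent matrix commuting with B with Jordan type μ = (μ₁, ..., μ_s). Then either μ = (2λ) (a single part) or μ₁ ≤ λ + 1. -/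
/-!
Since `B ^ λ = 0` and `B ^ (λ - 1)` has rank 2, the space is a free module of rank 2 over
`K[X] / (X ^ λ)`, with `X` acting as `B`, and `A`, which commutes with `B`, acts on it as a
`2 × 2` matrix `P` over `K[X]`: `A ^ N = 0` iff `X ^ λ` divides every entry of `P ^ N`.
Modulo `X` the matrix `P` is nilpotent, so `X` divides `t = tr P` and `d = det P`, and the
Cayley–Hamilton identity `P ^ 2 = t • P - d • 1` decides everything. If `X ^ 2 ∣ d`, then
`X ^ λ ∣ P ^ (λ + 1)`, i.e. every Jordan block of `A` has size at most `λ + 1`. Otherwise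
`d = X u` with `u(0) ≠ 0`, and writing `t = X t'`,
`P ^ (2m + 1) = X ^ m • P (t' • P - u • 1) ^ m`, where the last factor is invertible
modulo `X` and `P ≢ 0 mod X`; so `A ^ (2λ - 1) ≠ 0`, and `A` is a single Jordan block of
size `2λ`.
-/

open Matrix

open Polynomial

theorem Matrix.sq_eq_trace_smul_sub_det_smul_one {R : Type*} [CommRing R] [Nontrivial R]
    (P : Matrix (Fin 2) (Fin 2) R) : P ^ 2 = P.trace • P - P.det • 1 := by
  have h := P.aeval_self_charpoly
  rw [charpoly_fin_two] at h
  simp only [map_add, map_sub, map_pow, aeval_X, map_mul, aeval_C,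
    Algebra.algebraMap_eq_smul_one, smul_mul_assoc, one_mul] at h
  rw [← sub_eq_zero, ← h]
  abel

lemma Matrix.rank_eq_zero_iff {K : Type*} [Field K] {m : Type*} [Fintype m] [DecidableEq m]
    {M : Matrix m m K} : M.rank = 0 ↔ M = 0 := by
  rw [Matrix.rank, Submodule.finrank_eq_zero, LinearMap.range_eq_bot, ← Matrix.toLin'_apply',
    LinearEquiv.map_eq_zero_iff]

lemma Matrix.forall_dvd_mulVec_iff {R : Type*} [CommRing R] {m n : Type*} [Fintype n]
    [DecidableEq n] (Q : Matrix m n R) (a : R) :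
    (∀ v i, a ∣ (Q *ᵥ v) i) ↔ ∀ i j, a ∣ Q i j :=
  ⟨fun h i j => by simpa [mulVec_single_one] using h (Pi.single j 1) i,
    fun h _ i => Finset.dvd_sum fun j _ => (h i j).mul_right _⟩

lemma Matrix.exists_linearIndependent_mulVec {K : Type*} [Field K] {m : Type*} [Fintype m]
    [DecidableEq m] {C : Matrix m m K} {r : ℕ} (hr : C.rank = r) :
    ∃ e : Fin r → m → K, LinearIndependent K fun j => C *ᵥ e j := by
  let b := Module.finBasisOfFinrankEq K _ hr
  choose e he using fun j => (b j).2
  have hCe : (fun j => C *ᵥ e j) = Submodule.subtype _ ∘ b := funext he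
  exact ⟨e, hCe ▸ b.linearIndependent.map' _ (Submodule.ker_subtype _)⟩

section PolynomialMatrix

variable {K : Type*} [Field K]

lemma map_eval_zero_eq_zero_iff {m n : Type*} (Q : Matrix m n K[X]) :
    Q.map (eval 0) = 0 ↔ ∀ i j, X ∣ Q i j := by
  simp [← Matrix.ext_iff, X_dvd_iff, coeff_zero_eq_eval_zero]

variable {n : Type*} [Fintype n] [DecidableEq n] {P : Matrix n n K[X]}

lemma X_dvd_trace_of_isNilpotent (h : IsNilpotent (P.map (eval 0))) : X ∣ P.trace := by
  rw [X_dvd_iff, coeff_zero_eq_eval_zero, ← coe_evalRingHom, AddMonoidHom.map_trace]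
  exact (Matrix.isNilpotent_trace_of_isNilpotent h).eq_zero

lemma X_dvd_det_of_isNilpotent [Nonempty n] (h : IsNilpotent (P.map (eval 0))) :
    X ∣ P.det := by
  obtain ⟨N, hN⟩ := h
  rw [X_dvd_iff, coeff_zero_eq_eval_zero, ← coe_evalRingHom, RingHom.map_det,
    RingHom.mapMatrix_apply, coe_evalRingHom]
  exact IsNilpotent.eq_zero ⟨N, by rw [← Matrix.det_pow, hN, Matrix.det_zero]⟩

lemma isNilpotent_map_eval_zero {k N : ℕ} (hk : 0 < k) (h : ∀ i j, X ^ k ∣ (P ^ N) i j) :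
    IsNilpotent (P.map (eval 0)) := by
  refine ⟨N, ?_⟩
  rw [← coe_evalRingHom, ← Matrix.map_pow, coe_evalRingHom, map_eval_zero_eq_zero_iff]
  exact fun i j => (dvd_pow_self X hk.ne').trans (h i j)

end PolynomialMatrix

section TwoByTwo

variable {K : Type*} [Field K] {P : Matrix (Fin 2) (Fin 2) K[X]}

lemma X_pow_dvd_pow_succ (ht : X ∣ P.trace) (hd : X ^ 2 ∣ P.det) (m : ℕ) (i j : Fin 2) :
    X ^ m ∣ (P ^ (m + 1)) i j := by
  obtain ⟨t, ht⟩ := ht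
  obtain ⟨d, hd⟩ := hd
  -- The extra factor `X` in the scalar part is what `X ^ 2 ∣ det P` pays for at each step.
  have key : ∀ m : ℕ, ∃ p q : K[X],
      P ^ (m + 1) = (X ^ m : K[X]) • ((X * p) • 1 + q • P) := by
    intro m
    induction m with
    | zero => exact ⟨0, 1, by simp⟩
    | succ m ih =>
      obtain ⟨p, q, hpq⟩ := ih
      refine ⟨-(q * d), p + q * t, ?_⟩
      rw [pow_succ, hpq, smul_mul_assoc, add_mul, smul_mul_assoc, smul_mul_assoc, one_mul,
        ← sq, Matrix.sq_eq_trace_smul_sub_det_smul_one, ht, hd]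
      module
  obtain ⟨p, q, hpq⟩ := key m
  rw [hpq, Matrix.smul_apply, smul_eq_mul]
  exact dvd_mul_right _ _

lemma not_X_pow_dvd_pow_two_mul_add_one (hnil : IsNilpotent (P.map (eval 0)))
    (hd : ¬ X ^ 2 ∣ P.det) (m : ℕ) : ¬ ∀ i j, X ^ (m + 1) ∣ (P ^ (2 * m + 1)) i j := by
  obtain ⟨t, ht⟩ := X_dvd_trace_of_isNilpotent hnil
  obtain ⟨u, hu⟩ := X_dvd_det_of_isNilpotent hnil
  have hu0 : u.eval 0 ≠ 0 := by
    intro h0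
    rw [← coeff_zero_eq_eval_zero, ← X_dvd_iff] at h0
    exact hd (hu ▸ sq (X : K[X]) ▸ mul_dvd_mul_left X h0)
  have hpow : P ^ (2 * m + 1) = (X ^ m : K[X]) • (P * (t • P - u • 1) ^ m) := by
    rw [pow_succ', pow_mul, Matrix.sq_eq_trace_smul_sub_det_smul_one, ht, hu, ← smul_smul,
      ← smul_smul, ← smul_sub, _root_.smul_pow, mul_smul_comm]
  have hunit : IsUnit ((t • P - u • 1).map (eval 0)) := by
    have hmap : (t • P - u • 1).map (eval 0) =
        eval 0 t • P.map (eval 0) + algebraMap K _ (-eval 0 u) := by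
      ext i j
      by_cases h : i = j <;> simp [h, sub_eq_add_neg, Matrix.algebraMap_matrix_apply]
    rw [hmap]
    exact (hnil.smul _).isUnit_add_right_of_commute ((neg_ne_zero.mpr hu0).isUnit.map _)
      (Algebra.commute_algebraMap_right _ _)
  intro hdvd
  have hX : (P * (t • P - u • 1) ^ m).map (eval 0) = 0 := by
    refine (map_eval_zero_eq_zero_iff _).mpr fun i j => ?_
    have := hdvd i j
    rw [hpow, Matrix.smul_apply, smul_eq_mul, pow_succ] at this
    exact (mul_dvd_mul_iff_left (pow_ne_zero m X_ne_zero)).mp this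
  rw [← coe_evalRingHom, Matrix.map_mul, Matrix.map_pow, coe_evalRingHom,
    (hunit.pow m).mul_left_eq_zero, map_eval_zero_eq_zero_iff] at hX
  choose Q hQ using hX
  have hPQ : P = (X : K[X]) • Matrix.of Q := Matrix.ext fun i j => by simp [hQ i j]
  exact hd ⟨(Matrix.of Q).det, by rw [hPQ, Matrix.det_smul, Fintype.card_fin]⟩

lemma not_X_pow_dvd_pow_two_mul_sub_one {lam : ℕ} (hl : 0 < lam)
    (h2 : ∀ i j, X ^ lam ∣ (P ^ (2 * lam)) i j)
    (h1 : ¬ ∀ i j, X ^ lam ∣ (P ^ (lam + 1)) i j) :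
    ¬ ∀ i j, X ^ lam ∣ (P ^ (2 * lam - 1)) i j := by
  have hnil := isNilpotent_map_eval_zero hl h2
  by_cases hd : X ^ 2 ∣ P.det
  · exact absurd (X_pow_dvd_pow_succ (X_dvd_trace_of_isNilpotent hnil) hd lam) h1
  · obtain ⟨m, rfl⟩ : ∃ m, lam = m + 1 := ⟨lam - 1, by omega⟩
    rw [show 2 * (m + 1) - 1 = 2 * m + 1 by omega]
    exact not_X_pow_dvd_pow_two_mul_add_one hnil hd m

end TwoByTwo

section PolyComb

variable {K : Type*} [Field K] {m ι : Type*} [Fintype m] [DecidableEq m] [Fintype ι]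
  {B : Matrix m m K} {e : ι → m → K}

noncomputable def polyComb (B : Matrix m m K) (e : ι → m → K) (v : ι → K[X]) : m → K :=
  ∑ j, aeval B (v j) *ᵥ e j

lemma polyComb_sum {κ : Type*} (s : Finset κ) (w : κ → ι → K[X]) :
    polyComb B e (∑ k ∈ s, w k) = ∑ k ∈ s, polyComb B e (w k) := by
  simp only [polyComb, Finset.sum_apply, map_sum, Matrix.sum_mulVec]
  exact Finset.sum_comm

lemma aeval_mulVec_polyComb (p : K[X]) (v : ι → K[X]) :
    aeval B p *ᵥ polyComb B e v = polyComb B e (p • v) := by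
  simp [polyComb, Matrix.mulVec_sum, Matrix.mulVec_mulVec]

lemma mulVec_polyComb_of_commute {M : Matrix m m K} (hM : Commute M B)
    {P : Matrix ι ι K[X]} (hP : ∀ j, M *ᵥ e j = polyComb B e (fun i => P i j))
    (v : ι → K[X]) : M *ᵥ polyComb B e v = polyComb B e (P *ᵥ v) := by
  have hMp (p : K[X]) : M * aeval B p = aeval B p * M := by
    rw [aeval_eq_smeval]
    exact (smeval_commute_left K p hM.symm).symm.eq
  calc M *ᵥ polyComb B e v = ∑ j, aeval B (v j) *ᵥ (M *ᵥ e j) := by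
        simp only [polyComb, Matrix.mulVec_sum, Matrix.mulVec_mulVec, hMp]
    _ = ∑ j, aeval B (v j) *ᵥ polyComb B e (fun i => P i j) := by simp only [hP]
    _ = polyComb B e (∑ j, v j • fun i => P i j) := by
        simp only [aeval_mulVec_polyComb, polyComb_sum]
    _ = polyComb B e (P *ᵥ v) := by
        congr 1
        ext i
        simp [Matrix.mulVec, dotProduct, mul_comm]

lemma pow_mulVec_polyComb [DecidableEq ι] {M : Matrix m m K} (hM : Commute M B)
    {P : Matrix ι ι K[X]} (hP : ∀ j, M *ᵥ e j = polyComb B e (fun i => P i j)) (N : ℕ)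
    (v : ι → K[X]) : (M ^ N) *ᵥ polyComb B e v = polyComb B e ((P ^ N) *ᵥ v) := by
  induction N with
  | zero => simp
  | succ N ih =>
    rw [pow_succ', ← Matrix.mulVec_mulVec, ih, mulVec_polyComb_of_commute hM hP,
      Matrix.mulVec_mulVec, ← pow_succ']

variable {lam : ℕ}

lemma pow_pred_mul_aeval (hB : B ^ lam = 0) (hl : 0 < lam) (p : K[X]) :
    B ^ (lam - 1) * aeval B p = p.eval 0 • B ^ (lam - 1) := by
  obtain ⟨q, hq⟩ := X_dvd_sub_C (p := p)
  have hp : p = C (p.eval 0) + X * q := by rw [← coeff_zero_eq_eval_zero, ← hq]; ring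
  conv_lhs => rw [hp]
  rw [map_add, map_mul, aeval_X, aeval_C, mul_add, ← mul_assoc, pow_sub_one_mul hl.ne', hB,
    zero_mul, add_zero, Algebra.algebraMap_eq_smul_one, mul_smul_comm, mul_one]

lemma X_pow_dvd_of_pow_sub_mulVec_polyComb_eq_zero (hB : B ^ lam = 0)
    (hind : LinearIndependent K fun j => B ^ (lam - 1) *ᵥ e j) {k : ℕ} (hk : k ≤ lam)
    {v : ι → K[X]} (hv : B ^ (lam - k) *ᵥ polyComb B e v = 0) (j : ι) : X ^ k ∣ v j := by
  induction k generalizing v with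
  | zero => simp
  | succ k ih =>
    have hl : 0 < lam := by omega
    have hv' : B ^ (lam - 1) *ᵥ polyComb B e v = 0 := by
      rw [show lam - 1 = k + (lam - (k + 1)) by omega, pow_add, ← Matrix.mulVec_mulVec, hv,
        Matrix.mulVec_zero]
    -- `B ^ (λ - 1)` only sees constant terms; once they vanish, divide `v` by `X`.
    have h0 : ∀ j, (v j).eval 0 = 0 := by
      simp only [polyComb, Matrix.mulVec_sum, Matrix.mulVec_mulVec, pow_pred_mul_aeval hB hl,
        Matrix.smul_mulVec] at hv'
      exact Fintype.linearIndependent_iff.mp hind _ hv'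
    choose w hw using fun j => X_dvd_iff.mpr ((coeff_zero_eq_eval_zero _).trans (h0 j))
    have hvw : v = (X : K[X]) • w := funext hw
    rw [hvw, ← aeval_mulVec_polyComb, aeval_X, Matrix.mulVec_mulVec, ← pow_succ,
      show lam - (k + 1) + 1 = lam - k by omega] at hv
    rw [hw j, pow_succ']
    exact mul_dvd_mul_left X (ih (by omega) hv)

lemma polyComb_eq_zero_iff (hB : B ^ lam = 0)
    (hind : LinearIndependent K fun j => B ^ (lam - 1) *ᵥ e j) {v : ι → K[X]} :
    polyComb B e v = 0 ↔ ∀ j, X ^ lam ∣ v j := by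
  refine ⟨fun hv => X_pow_dvd_of_pow_sub_mulVec_polyComb_eq_zero hB hind le_rfl (by simp [hv]),
    fun hv => Finset.sum_eq_zero fun j _ => ?_⟩
  obtain ⟨q, hq⟩ := hv j
  rw [hq, map_mul, map_pow, aeval_X, hB, zero_mul, Matrix.zero_mulVec]

lemma polyComb_sum_monomial (g : Fin lam × ι → K) :
    polyComb B e (fun j => ∑ i : Fin lam, monomial i (g (i, j))) =
      ∑ ij, g ij • (B ^ (ij.1 : ℕ) *ᵥ e ij.2) := by
  simp [polyComb, map_sum, aeval_monomial, Matrix.sum_mulVec, Fintype.sum_prod_type_right,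
    Algebra.algebraMap_eq_smul_one, Matrix.smul_mulVec]

lemma linearIndependent_pow_mulVec (hB : B ^ lam = 0)
    (hind : LinearIndependent K fun j => B ^ (lam - 1) *ᵥ e j) :
    LinearIndependent K fun ij : Fin lam × ι => B ^ (ij.1 : ℕ) *ᵥ e ij.2 := by
  refine Fintype.linearIndependent_iff.mpr fun g hg ⟨i, j⟩ => ?_
  have := (polyComb_eq_zero_iff hB hind).mp ((polyComb_sum_monomial g).trans hg) j
  rw [X_pow_dvd_iff] at this
  simpa [finsetSum_coeff, coeff_monomial, Fin.val_inj] using this i i.isLt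

lemma polyComb_surjective (hB : B ^ lam = 0)
    (hind : LinearIndependent K fun j => B ^ (lam - 1) *ᵥ e j)
    (hcard : Fintype.card ι * lam = Fintype.card m) : Function.Surjective (polyComb B e) := by
  intro x
  have hspan := (linearIndependent_pow_mulVec hB hind).span_eq_top_of_card_eq_finrank'
    (by simp [← hcard, mul_comm])
  obtain ⟨g, hg⟩ := (Submodule.mem_span_range_iff_exists_fun K).mp (hspan ▸ Submodule.mem_top)
  exact ⟨_, (polyComb_sum_monomial g).trans hg⟩

end PolyComb

theorem exists_polyMatrix_pow_eq_zero_iff {K : Type*} [Field K] {m : Type*} [Fintype m]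
    [DecidableEq m] {A B : Matrix m m K} {lam r : ℕ} (hB : B ^ lam = 0)
    (hr : (B ^ (lam - 1)).rank = r) (hcard : r * lam = Fintype.card m) (hc : Commute A B) :
    ∃ P : Matrix (Fin r) (Fin r) K[X], ∀ N, A ^ N = 0 ↔ ∀ i j, X ^ lam ∣ (P ^ N) i j := by
  obtain ⟨e, hind⟩ := Matrix.exists_linearIndependent_mulVec hr
  have hsurj := polyComb_surjective hB hind (by simpa using hcard)
  choose w hw using fun j => hsurj (A *ᵥ e j)
  let P : Matrix (Fin r) (Fin r) K[X] := Matrix.of fun i j => w j i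
  have hP : ∀ j, A *ᵥ e j = polyComb B e (fun i => P i j) := fun j => (hw j).symm
  refine ⟨P, fun N => ?_⟩
  calc A ^ N = 0 ↔ ∀ v, (A ^ N) *ᵥ polyComb B e v = 0 := by
        simp only [Matrix.ext_iff_mulVec, Matrix.zero_mulVec]
        exact hsurj.forall
    _ ↔ ∀ v, polyComb B e (P ^ N *ᵥ v) = 0 := by simp only [pow_mulVec_polyComb hc hP]
    _ ↔ _ := by simp only [polyComb_eq_zero_iff hB hind, Matrix.forall_dvd_mulVec_iff]

lemma HasJordanType.pow_eq_zero_iff {K : Type*} [Field K] {n : ℕ}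
    {A : Matrix (Fin n) (Fin n) K} {l : List ℕ} (h : HasJordanType A l) (i : ℕ) :
    A ^ i = 0 ↔ ∀ p ∈ l, p ≤ i := by
  rw [← Matrix.rank_eq_zero_iff, h.2 i, List.sum_eq_zero_iff]
  simp [Nat.sub_eq_zero_iff_le]

lemma IsPartition.le_of_mem {n p : ℕ} {l : List ℕ} (h : IsPartition n l) (hp : p ∈ l) :
    p ≤ n :=
  h.2.2 ▸ List.le_sum_of_mem hp

lemma IsPartition.eq_singleton_of_mem {n p : ℕ} {l : List ℕ} (h : IsPartition n l)
    (hp : p ∈ l) (hnp : n ≤ p) : l = [n] := by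
  obtain rfl : p = n := (h.le_of_mem hp).antisymm hnp
  have hsum : (l.erase p).sum = 0 := by have := List.sum_erase hp; rw [h.2.2] at this; omega
  have hnil : l.erase p = [] := List.eq_nil_iff_forall_not_mem.mpr fun x hx =>
    (h.2.1 x (List.mem_of_mem_erase hx)).ne' (List.sum_eq_zero_iff.mp hsum x hx)
  exact List.perm_singleton.mp (hnil ▸ List.perm_cons_erase hp)

theorem stmt15_general {K : Type*} [Field K]
    (lam : ℕ) (hl : 0 < lam)
    (B : Matrix (Fin (2 * lam)) (Fin (2 * lam)) K) (hB : HasJordanType B [lam, lam])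
    (A : Matrix (Fin (2 * lam)) (Fin (2 * lam)) K) (hc : A * B = B * A)
    (mu : List ℕ) (hA : HasJordanType A mu) :
    mu = [2 * lam] ∨ ∀ x ∈ mu, x ≤ lam + 1 := by
  refine or_iff_not_imp_right.mpr fun hbig => ?_
  obtain ⟨x, hx, hxgt⟩ : ∃ x ∈ mu, lam + 1 < x := by simpa using hbig
  have hB0 : B ^ lam = 0 := (hB.pow_eq_zero_iff lam).mpr (by simp)
  have hBr : (B ^ (lam - 1)).rank = 2 := by
    rw [hB.2, List.map_cons, List.map_cons, List.map_nil, List.sum_cons, List.sum_cons,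
      List.sum_nil]
    omega
  obtain ⟨P, hP⟩ := exists_polyMatrix_pow_eq_zero_iff hB0 hBr (by simp) hc
  have hA0 : A ^ (2 * lam) = 0 := (hA.pow_eq_zero_iff _).mpr fun p hp => hA.1.le_of_mem hp
  have hA1 : A ^ (lam + 1) ≠ 0 := fun h => ((hA.pow_eq_zero_iff _).mp h x hx).not_gt hxgt
  have hA2 : A ^ (2 * lam - 1) ≠ 0 := by
    rw [ne_eq, hP] at hA1 ⊢
    rw [hP] at hA0
    exact not_X_pow_dvd_pow_two_mul_sub_one hl hA0 hA1
  obtain ⟨p, hp, hpgt⟩ : ∃ p ∈ mu, 2 * lam - 1 < p := by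
    simpa using mt (hA.pow_eq_zero_iff _).mpr hA2
  exact hA.1.eq_singleton_of_mem hp (by omega)

/-- If `B` has Jordan type `(λ, λ)` and a nilpotent `A` commuting with `B` has type
`μ`, then either `μ = (2λ)` or `μ₁ ≤ λ + 1`. -/
theorem stmt15 {K : Type*} [Field K] [IsAlgClosed K] [CharZero K]
    (lam : ℕ) (hl : 0 < lam)
    (B : Matrix (Fin (2 * lam)) (Fin (2 * lam)) K) (hB : HasJordanType B [lam, lam])
    (A : Matrix (Fin (2 * lam)) (Fin (2 * lam)) K) (hc : A * B = B * A)
    (mu : List ℕ) (hA : HasJordanType A mu) :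
    mu = [2 * lam] ∨ ∀ x ∈ mu, x ≤ lam + 1 :=
  stmt15_general lam hl B hB A hc mu hA
end
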